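/- Let C be an (N+1)d×(N+1)d symmetric positive definite matrix viewed as (N+1)×(N+1) blocks of size d×d. Then C⁻¹ is cyclic block tri-diagonal if and only if C admits both decompositions C = B^L + Γ^L D^L (Γ^L)' and C = B^F + Γ^F D^F (Γ^F)', where D^L and D^F are d×d positive definite matrices, B^L = [[B_1, 0],[0, 0]] and B^F = [[0, 0],[0, B_2]] with B_1 and B_2 Nd×Nd positive definite matrices whose inverses are block tri-diagonal, Γ^L = [S_1; I] and Γ^F = [I; S_2] with S_1, S_2 arbitrary Nd×d matrices and I the d×d identity. -/

import Mathlib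

open MeasureTheory ProbabilityTheory Matrix
open scoped NNReal

namespace CMSeqPaper

variable {Ω : Type*} [MeasurableSpace Ω]

/-- Square `d × d` real matrices. -/
abbrev Mat (d : ℕ) := Matrix (Fin d) (Fin d) ℝ

/-- `X` is a zero-mean jointly Gaussian random vector with covariance matrix `C`
(Cramér–Wold characterization: every linear functional of `X` is a centered real
Gaussian with the induced variance). -/
def IsZeroMeanGaussian {ι : Type*} [Fintype ι] (μ : Measure Ω)
    (X : Ω → ι → ℝ) (C : Matrix ι ι ℝ) : Prop :=
  ∀ l : ι → ℝ,
    μ.map (fun ω => ∑ i, l i * X ω i) = gaussianReal 0 (l ⬝ᵥ C.mulVec l).toNNReal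

/-- The stacked vector over times `0, …, N` of a `d`-dimensional sequence. -/
def stack (N d : ℕ) (x : ℕ → Ω → Fin d → ℝ) : Ω → Fin (N + 1) × Fin d → ℝ :=
  fun ω p => x (p.1 : ℕ) ω p.2

/-- `[x_k]`, `k ∈ [0,N]`, is a zero-mean nonsingular Gaussian sequence whose stacked
vector has (positive definite) covariance matrix `C`. -/
def ZMNG (N d : ℕ) (μ : Measure Ω) (x : ℕ → Ω → Fin d → ℝ)
    (C : Matrix (Fin (N + 1) × Fin d) (Fin (N + 1) × Fin d) ℝ) : Prop :=
  (∀ k, k ≤ N → Measurable (x k)) ∧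
    IsZeroMeanGaussian μ (stack N d x) C ∧ C.PosDef

/-- The σ-algebra generated by the states at the times in `S`. -/
def sigmaOf {d : ℕ} (x : ℕ → Ω → Fin d → ℝ) (S : Set ℕ) : MeasurableSpace Ω :=
  ⨆ i ∈ S, MeasurableSpace.comap (x i) inferInstance

/-- The conditional distribution of `x k` given the states at the times in `S`
coincides (a.e.) with the conditional distribution of `x k` given the states at the
times in `T`. -/
def CondEq {d : ℕ} (μ : Measure Ω) (x : ℕ → Ω → Fin d → ℝ) (k : ℕ)
    (S T : Set ℕ) : Prop :=
  ∀ A : Set (Fin d → ℝ), MeasurableSet A →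
    μ[A.indicator (fun _ => (1 : ℝ)) ∘ x k | sigmaOf x S]
      =ᵐ[μ] μ[A.indicator (fun _ => (1 : ℝ)) ∘ x k | sigmaOf x T]

/-- `[x_k]` is `[k₁,k₂]`-CM_c: for all `k₁ ≤ j < k ≤ k₂`, the conditional
distribution of `x k` given `(x_{k₁}, …, x_j, x_c)` equals the one given `(x_j, x_c)`. -/
def IsCM {d : ℕ} (μ : Measure Ω) (x : ℕ → Ω → Fin d → ℝ) (k₁ k₂ c : ℕ) : Prop :=
  ∀ j k, k₁ ≤ j → j < k → k ≤ k₂ →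
    CondEq μ x k (Set.Icc k₁ j ∪ {c}) ({j} ∪ {c})

/-- `[x_k]` is Markov on the index interval `[a,b]`. -/
def IsMarkovOn {d : ℕ} (μ : Measure Ω) (x : ℕ → Ω → Fin d → ℝ) (a b : ℕ) : Prop :=
  ∀ j k, a ≤ j → j < k → k ≤ b → CondEq μ x k (Set.Icc a j) {j}

/-- `[x_k]` is reciprocal on `[0,N]`. -/
def IsReciprocal {d : ℕ} (μ : Measure Ω) (x : ℕ → Ω → Fin d → ℝ) (N : ℕ) : Prop :=
  ∀ j k l, j < k → k < l → l ≤ N →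
    CondEq μ x k (Set.Icc 0 j ∪ Set.Icc l N) ({j} ∪ {l})

/-- Block `(i,j)` of the block matrix `A` is zero. -/
def BlockZero {n d : ℕ} (A : Matrix (Fin n × Fin d) (Fin n × Fin d) ℝ)
    (i j : Fin n) : Prop :=
  ∀ a b, A (i, a) (j, b) = 0

/-- `|i - j| ≥ 2` for block indices. -/
def Far {n : ℕ} (i j : Fin n) : Prop :=
  (i : ℕ) + 2 ≤ (j : ℕ) ∨ (j : ℕ) + 2 ≤ (i : ℕ)

/-- Block tri-diagonal: every block `(i,j)` with `|i-j| ≥ 2` is zero. -/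
def BlockTriDiag {n d : ℕ} (A : Matrix (Fin n × Fin d) (Fin n × Fin d) ℝ) : Prop :=
  ∀ i j, Far i j → BlockZero A i j

/-- The CM_L form: every block `(i,j)` with `|i-j| ≥ 2` is zero except possibly
blocks in the last block row and last block column. -/
def HasCMLForm {n d : ℕ} (A : Matrix (Fin n × Fin d) (Fin n × Fin d) ℝ) : Prop :=
  ∀ i j, Far i j → (i : ℕ) ≠ n - 1 → (j : ℕ) ≠ n - 1 → BlockZero A i j

/-- The CM_F form: every block `(i,j)` with `|i-j| ≥ 2` is zero except possibly
blocks in the first block row and first block column. -/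
def HasCMFForm {n d : ℕ} (A : Matrix (Fin n × Fin d) (Fin n × Fin d) ℝ) : Prop :=
  ∀ i j, Far i j → (i : ℕ) ≠ 0 → (j : ℕ) ≠ 0 → BlockZero A i j

/-- Cyclic block tri-diagonal: every block `(i,j)` with `|i-j| ≥ 2` is zero except
possibly the corner blocks `(0, n-1)` and `(n-1, 0)`. -/
def CyclicBlockTriDiag {n d : ℕ} (A : Matrix (Fin n × Fin d) (Fin n × Fin d) ℝ) : Prop :=
  ∀ i j, Far i j → ¬((i : ℕ) = 0 ∧ (j : ℕ) = n - 1) →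
    ¬((i : ℕ) = n - 1 ∧ (j : ℕ) = 0) → BlockZero A i j

/-- The stacked block-diagonal matrix with diagonal blocks `G 0, …, G N`. -/
def blockDiag (N d : ℕ) (G : ℕ → Mat d) :
    Matrix (Fin (N + 1) × Fin d) (Fin (N + 1) × Fin d) ℝ :=
  fun p q => if (p.1 : ℕ) = (q.1 : ℕ) then G (p.1 : ℕ) p.2 q.2 else 0

/-- `[x_k]` obeys the CM_L model with parameters `Gm k = G_{k,k-1}` and
`GN k = G_{k,N}` for `k ∈ [1,N-1]`, boundary parameter `GN 0 = G_{0,N}`, and noise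
covariances `Gcov k = G_k = Cov(e_k)`: the `e_k` are zero-mean jointly Gaussian,
mutually uncorrelated, with positive definite covariances, with
`x_k = G_{k,k-1} x_{k-1} + G_{k,N} x_N + e_k` for `k ∈ [1,N-1]`, and boundary
condition `x_N = e_N`, `x_0 = G_{0,N} x_N + e_0`. -/
def CMLModel (N d : ℕ) (μ : Measure Ω) (x : ℕ → Ω → Fin d → ℝ)
    (Gm GN Gcov : ℕ → Mat d) : Prop :=
  ∃ e : ℕ → Ω → Fin d → ℝ,
    ZMNG N d μ e (blockDiag N d Gcov) ∧
    (∀ k, k ≤ N → (Gcov k).PosDef) ∧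
    (∀ᵐ ω ∂μ,
      (∀ k, 1 ≤ k → k ≤ N - 1 →
        x k ω = (Gm k).mulVec (x (k - 1) ω) + (GN k).mulVec (x N ω) + e k ω) ∧
      x N ω = e N ω ∧ x 0 ω = (GN 0).mulVec (x N ω) + e 0 ω)

/-- `[y_k]` obeys the Markov model with parameters `Mm k = M_{k,k-1}` for
`k ∈ [1,N]` and noise covariances `Mcov k = M_k = Cov(e_k)`: the `e_k` are
zero-mean jointly Gaussian, mutually uncorrelated, with positive definite
covariances, `y_0 = e_0` and `y_k = M_{k,k-1} y_{k-1} + e_k` for `k ∈ [1,N]`. -/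
def MarkovModel (N d : ℕ) (μ : Measure Ω) (y : ℕ → Ω → Fin d → ℝ)
    (Mm Mcov : ℕ → Mat d) : Prop :=
  ∃ e : ℕ → Ω → Fin d → ℝ,
    ZMNG N d μ e (blockDiag N d Mcov) ∧
    (∀ k, k ≤ N → (Mcov k).PosDef) ∧
    (∀ᵐ ω ∂μ, y 0 ω = e 0 ω ∧
      ∀ k, 1 ≤ k → k ≤ N → y k ω = (Mm k).mulVec (y (k - 1) ω) + e k ω)

/-- Representation of `[x_k]` as a zero-mean nonsingular Gaussian Markov sequence
plus `Γ_k x_c`, where `c ∈ {0,N}`: `y` (which coincides with `x` at time `c`) is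
jointly zero-mean nonsingular Gaussian, the states of `y` at times `≠ c` are
uncorrelated with `y c = x c`, `y` is Markov on `[0,N] \ {c}`, and
`x_k = y_k + Γ_k x_c` for `k ∈ [0,N] \ {c}`. -/
def MarkovPlusVector (N d c : ℕ) (μ : Measure Ω) (x y : ℕ → Ω → Fin d → ℝ)
    (Γ : ℕ → Mat d) : Prop :=
  ∃ C' : Matrix (Fin (N + 1) × Fin d) (Fin (N + 1) × Fin d) ℝ,
    (∀ᵐ ω ∂μ, y c ω = x c ω) ∧
    ZMNG N d μ y C' ∧
    (∀ i j : Fin (N + 1),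
      (((i : ℕ) = c ∧ (j : ℕ) ≠ c) ∨ ((i : ℕ) ≠ c ∧ (j : ℕ) = c)) →
      ∀ a b, C' (i, a) (j, b) = 0) ∧
    IsMarkovOn μ y (if c = 0 then 1 else 0) (if c = 0 then N else N - 1) ∧
    (∀ᵐ ω ∂μ, ∀ k, k ≤ N → k ≠ c → x k ω = y k ω + (Γ k).mulVec (x c ω))

/-- `M_{N|k} = M_{N,N-1} ⋯ M_{k+1,k}` (with `M_{N|N} = I`), where `Mm k = M_{k,k-1}`. -/
def MNk (d : ℕ) (Mm : ℕ → Mat d) (N k : ℕ) : Mat d :=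
  (List.range (N - k)).foldl (fun A i => A * Mm (N - i)) 1

/-- `C_{N|k} = ∑_{n=k}^{N-1} M_{N|n+1} M_{n+1} M_{N|n+1}'`. -/
def CNk (d : ℕ) (Mm Mcov : ℕ → Mat d) (N k : ℕ) : Mat d :=
  ∑ n ∈ Finset.Icc k (N - 1), MNk d Mm N (n + 1) * Mcov (n + 1) * (MNk d Mm N (n + 1))ᵀ

/-- The `(N+1)d × (N+1)d` matrix `[[B₁, 0], [0, 0]]` (`B₁` occupies the first `N`
block rows and columns). -/
def embedL (N d : ℕ) (B₁ : Matrix (Fin N × Fin d) (Fin N × Fin d) ℝ) :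
    Matrix (Fin (N + 1) × Fin d) (Fin (N + 1) × Fin d) ℝ :=
  fun p q =>
    if h : (p.1 : ℕ) < N ∧ (q.1 : ℕ) < N then
      B₁ (⟨(p.1 : ℕ), h.1⟩, p.2) (⟨(q.1 : ℕ), h.2⟩, q.2)
    else 0

/-- The `(N+1)d × d` matrix `Γ = [S; I]`. -/
def gammaL (N d : ℕ) (S : Matrix (Fin N × Fin d) (Fin d) ℝ) :
    Matrix (Fin (N + 1) × Fin d) (Fin d) ℝ :=
  fun p a =>
    if h : (p.1 : ℕ) < N then S (⟨(p.1 : ℕ), h⟩, p.2) a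
    else (1 : Mat d) p.2 a

/-- The `(N+1)d × (N+1)d` matrix `[[0, 0], [0, B₂]]` (`B₂` occupies the last `N`
block rows and columns). -/
def embedF (N d : ℕ) (B₂ : Matrix (Fin N × Fin d) (Fin N × Fin d) ℝ) :
    Matrix (Fin (N + 1) × Fin d) (Fin (N + 1) × Fin d) ℝ :=
  fun p q =>
    if h : 0 < (p.1 : ℕ) ∧ 0 < (q.1 : ℕ) then
      B₂ (⟨(p.1 : ℕ) - 1, by have := p.1.isLt; omega⟩, p.2)
        (⟨(q.1 : ℕ) - 1, by have := q.1.isLt; omega⟩, q.2)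
    else 0

/-- The `(N+1)d × d` matrix `Γ = [I; S]`. -/
def gammaF (N d : ℕ) (S : Matrix (Fin N × Fin d) (Fin d) ℝ) :
    Matrix (Fin (N + 1) × Fin d) (Fin d) ℝ :=
  fun p a =>
    if h : 0 < (p.1 : ℕ) then
      S (⟨(p.1 : ℕ) - 1, by have := p.1.isLt; omega⟩, p.2) a
    else (1 : Mat d) p.2 a
section Aux

set_option linter.unusedSectionVars false

variable {p q : Type*} [Fintype p] [DecidableEq p] [Fintype q] [DecidableEq q]

lemma posDef_submatrix_equiv {n m : Type*} [Fintype n] [Fintype m] [DecidableEq n]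
    [DecidableEq m] {M : Matrix n n ℝ} (hM : M.PosDef) (e : m ≃ n) :
    (M.submatrix e e).PosDef := by
  refine Matrix.PosDef.of_dotProduct_mulVec_pos (hM.1.submatrix e) (fun x hx => ?_)
  have hx' : x ∘ e.symm ≠ 0 := fun h => hx (by ext i; simpa using congrFun h (e i))
  have key : star x ⬝ᵥ ((M.submatrix e e) *ᵥ x)
      = star (x ∘ e.symm) ⬝ᵥ (M *ᵥ (x ∘ e.symm)) := by
    rw [Matrix.submatrix_mulVec_equiv]
    simp only [dotProduct]
    refine Fintype.sum_equiv e _ _ (fun i => ?_)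
    simp
  rw [key]
  exact hM.dotProduct_mulVec_pos hx'

noncomputable def posDefInvertible {M : Matrix p p ℝ} (hM : M.PosDef) : Invertible M :=
  M.invertibleOfIsUnitDet (isUnit_iff_ne_zero.mpr hM.det_pos.ne')

lemma ct_eq_t {m n : Type*} (M : Matrix m n ℝ) : Mᴴ = Mᵀ := by
  ext i j; simp [conjTranspose_apply]

lemma sum_elim_zero_left_ne {x : q → ℝ} (hx : x ≠ 0) :
    Sum.elim (0 : p → ℝ) x ≠ 0 := by
  intro h
  exact hx (by ext i; simpa using congrFun h (Sum.inr i))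

lemma schur_key (A : Matrix p p ℝ) (B : Matrix p q ℝ) (D : Matrix q q ℝ)
    (hM : (fromBlocks A B Bᵀ D).PosDef) :
    D.PosDef ∧ (A - B * D⁻¹ * Bᵀ).PosDef ∧
      (∀ i j, (fromBlocks A B Bᵀ D)⁻¹ (Sum.inl i) (Sum.inl j) = (A - B * D⁻¹ * Bᵀ)⁻¹ i j) ∧
      fromBlocks A B Bᵀ D =
        fromBlocks (A - B * D⁻¹ * Bᵀ) 0 0 0 +
          fromRows (B * D⁻¹) 1 * D * (fromRows (B * D⁻¹) 1)ᵀ := by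
  have hBt : Bᴴ = Bᵀ := ct_eq_t B
  have hD : D.PosDef := by
    refine Matrix.PosDef.of_dotProduct_mulVec_pos ?_ ?_
    · ext i j
      have := congrFun (congrFun hM.1 (Sum.inr i)) (Sum.inr j)
      simpa [conjTranspose_apply] using this
    · intro x hx
      have h2 := hM.dotProduct_mulVec_pos (x := Sum.elim (0 : p → ℝ) x) (sum_elim_zero_left_ne hx)
      have key : star (Sum.elim (0 : p → ℝ) x) ⬝ᵥ
          ((fromBlocks A B Bᵀ D) *ᵥ Sum.elim (0 : p → ℝ) x) = star x ⬝ᵥ (D *ᵥ x) := by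
        simp [fromBlocks_mulVec, dotProduct, Fintype.sum_sum_type]
      rwa [key] at h2
  haveI : Invertible D := posDefInvertible hD
  have hDt : Dᵀ = D := by rw [← ct_eq_t, hD.1]
  have hS : (A - B * D⁻¹ * Bᵀ).PosDef := by
    refine Matrix.PosDef.of_dotProduct_mulVec_pos ?_ ?_
    · have := (Matrix.IsHermitian.fromBlocks₂₂ A B hD.1).mp (by rw [hBt]; exact hM.1)
      rwa [hBt] at this
    · intro x hx
      have hne : Sum.elim x (-((D⁻¹ * Bᵀ) *ᵥ x)) ≠ 0 := by
        intro h
        exact hx (by ext i; simpa using congrFun h (Sum.inl i))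
      have h2 := hM.dotProduct_mulVec_pos hne
      have key := Matrix.schur_complement_eq₂₂ (α := ℝ) A B x (-((D⁻¹ * Bᵀ) *ᵥ x)) hD.1
      rw [hBt] at key
      rw [dotProduct_mulVec] at h2
      rw [key] at h2
      simpa [dotProduct_mulVec] using h2
  haveI : Invertible (A - B * D⁻¹ * Bᵀ) := posDefInvertible hS
  haveI : Invertible (A - B * ⅟D * Bᵀ) := by
    rw [invOf_eq_nonsing_inv]; infer_instance
  haveI : Invertible (fromBlocks A B Bᵀ D) := posDefInvertible hM
  refine ⟨hD, hS, ?_, ?_⟩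
  · intro i j
    have hinv := Matrix.invOf_fromBlocks₂₂_eq A B Bᵀ D
    rw [invOf_eq_nonsing_inv] at hinv
    rw [hinv]
    have : ⅟(A - B * ⅟D * Bᵀ) = (A - B * D⁻¹ * Bᵀ)⁻¹ := by
      rw [invOf_eq_nonsing_inv, invOf_eq_nonsing_inv]
    simp [fromBlocks_apply₁₁, this]
  · have hBDD : B * D⁻¹ * D = B := by
      rw [Matrix.mul_assoc, Matrix.nonsing_inv_mul D (isUnit_iff_ne_zero.mpr hD.det_pos.ne'),
        Matrix.mul_one]
    have hDDB : D * (D⁻¹ * Bᵀ) = Bᵀ := by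
      rw [← Matrix.mul_assoc, Matrix.mul_nonsing_inv D (isUnit_iff_ne_zero.mpr hD.det_pos.ne'),
        Matrix.one_mul]
    have hBDt : (B * D⁻¹)ᵀ = D⁻¹ * Bᵀ := by
      rw [Matrix.transpose_mul, Matrix.transpose_nonsing_inv, hDt]
    have hexp : fromRows (B * D⁻¹) 1 * D * (fromRows (B * D⁻¹) 1)ᵀ =
        fromBlocks (B * D⁻¹ * Bᵀ) B Bᵀ D := by
      rw [transpose_fromRows, Matrix.transpose_one, fromRows_mul, fromRows_mul_fromCols,
        Matrix.one_mul, Matrix.mul_one, Matrix.mul_one, hBDt, hDDB, hBDD, ← Matrix.mul_assoc]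
    rw [hexp, fromBlocks_add]
    congr 1 <;> simp

lemma schur_unique (A : Matrix p p ℝ) (B : Matrix p q ℝ) (D : Matrix q q ℝ)
    (B₁ : Matrix p p ℝ) (S₁ : Matrix p q ℝ) (DL : Matrix q q ℝ) (hDL : DL.PosDef)
    (h : fromBlocks A B Bᵀ D =
      fromBlocks B₁ 0 0 0 + fromRows S₁ 1 * DL * (fromRows S₁ 1)ᵀ) :
    B₁ = A - B * D⁻¹ * Bᵀ := by
  have hDLt : DLᵀ = DL := by rw [← ct_eq_t, hDL.1]
  have hexp : fromRows S₁ 1 * DL * (fromRows S₁ 1)ᵀ =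
      fromBlocks (S₁ * DL * S₁ᵀ) (S₁ * DL) (DL * S₁ᵀ) DL := by
    rw [transpose_fromRows, fromRows_mul, fromRows_mul_fromCols]
    rw [Matrix.one_mul, transpose_one, Matrix.mul_one, Matrix.mul_one, Matrix.mul_assoc]
  rw [hexp, fromBlocks_add] at h
  have hA : A = B₁ + S₁ * DL * S₁ᵀ := by
    simpa using congrArg Matrix.toBlocks₁₁ h
  have hB : B = S₁ * DL := by
    simpa using congrArg Matrix.toBlocks₁₂ h
  have hDD : D = DL := by
    simpa using congrArg Matrix.toBlocks₂₂ h
  haveI : Invertible DL := posDefInvertible hDL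
  have hS₁ : S₁ = B * DL⁻¹ := by
    rw [hB, Matrix.mul_assoc, Matrix.mul_nonsing_inv DL
      (isUnit_iff_ne_zero.mpr hDL.det_pos.ne'), Matrix.mul_one]
  have hc : B * DL⁻¹ * DL = B := by
    rw [Matrix.mul_assoc, Matrix.nonsing_inv_mul DL
      (isUnit_iff_ne_zero.mpr hDL.det_pos.ne'), Matrix.mul_one]
  have hX : S₁ * DL * S₁ᵀ = B * D⁻¹ * Bᵀ := by
    calc S₁ * DL * S₁ᵀ = B * DL⁻¹ * DL * (DL⁻¹ * Bᵀ) := by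
          rw [hS₁, Matrix.transpose_mul, Matrix.transpose_nonsing_inv, hDLt]
      _ = B * D⁻¹ * Bᵀ := by rw [hc, ← hDD, Matrix.mul_assoc]
  rw [hX] at hA
  rw [hA]
  abel

lemma eq_of_submatrix_eq {n m : Type*} (e : m ≃ n) {X Y : Matrix n n ℝ}
    (h : X.submatrix e e = Y.submatrix e e) : X = Y := by
  ext i j
  have := congrFun (congrFun h (e.symm i)) (e.symm j)
  simpa using this

lemma conj_submatrix {m m' k : Type*} [Fintype m] [Fintype m'] [Fintype k]
    (Γ : Matrix m' k ℝ) (DL : Matrix k k ℝ) (e : m ≃ m') :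
    (Γ * DL * Γᵀ).submatrix e e = (Γ.submatrix e id) * DL * (Γ.submatrix e id)ᵀ := by
  have h1 : (Γ * DL * Γᵀ).submatrix (e : m → m') (e : m → m') =
      (Γ * DL).submatrix (e : m → m') (Equiv.refl k) *
        Γᵀ.submatrix (Equiv.refl k) (e : m → m') :=
    (submatrix_mul_equiv (Γ * DL) Γᵀ e (Equiv.refl k) e).symm
  have h2 : (Γ * DL).submatrix (e : m → m') (Equiv.refl k : k → k) =
      Γ.submatrix (e : m → m') (Equiv.refl k) * DL.submatrix (Equiv.refl k) (id : k → k) :=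
    (submatrix_mul_equiv Γ DL e (Equiv.refl k) id).symm
  rw [h1, h2]
  simp [Matrix.transpose_submatrix, Equiv.coe_refl, Matrix.submatrix_id_id]

end Aux

section Sides

def eqL (N d : ℕ) : (Fin N × Fin d) ⊕ Fin d ≃ Fin (N + 1) × Fin d where
  toFun := Sum.elim (fun p => (p.1.castSucc, p.2)) (fun a => (Fin.last N, a))
  invFun p := if h : (p.1 : ℕ) < N then Sum.inl (⟨(p.1 : ℕ), h⟩, p.2) else Sum.inr p.2
  left_inv := by
    rintro (⟨i, a⟩ | a)
    · have h : ((i.castSucc : Fin (N + 1)) : ℕ) < N := by simp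
      simp only [Sum.elim_inl]
      show (if h : ((i.castSucc : Fin (N + 1)) : ℕ) < N then
        Sum.inl ((⟨(i.castSucc : ℕ), h⟩ : Fin N), a) else Sum.inr a) = Sum.inl (i, a)
      rw [dif_pos h]
      congr 1
    · simp
  right_inv := by
    rintro ⟨i, a⟩
    by_cases h : (i : ℕ) < N
    · simp only [dif_pos h, Sum.elim_inl]
      exact Prod.ext (Fin.ext (by simp)) rfl
    · simp only [dif_neg h, Sum.elim_inr]
      refine Prod.ext (Fin.ext ?_) rfl
      have := i.isLt
      simp only [Fin.val_last]
      omega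

def eqF (N d : ℕ) : (Fin N × Fin d) ⊕ Fin d ≃ Fin (N + 1) × Fin d where
  toFun := Sum.elim (fun p => (p.1.succ, p.2)) (fun a => ((0 : Fin (N + 1)), a))
  invFun p := if h : 0 < (p.1 : ℕ) then
      Sum.inl (⟨(p.1 : ℕ) - 1, by have := p.1.isLt; omega⟩, p.2) else Sum.inr p.2
  left_inv := by
    rintro (⟨i, a⟩ | a)
    · have h : 0 < ((i.succ : Fin (N + 1)) : ℕ) := by simp
      simp only [Sum.elim_inl, dif_pos h]
      congr 1
    · simp
  right_inv := by
    rintro ⟨i, a⟩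
    by_cases h : 0 < (i : ℕ)
    · simp only [dif_pos h, Sum.elim_inl]
      refine Prod.ext (Fin.ext ?_) rfl
      simp only [Fin.val_succ]
      omega
    · simp only [dif_neg h, Sum.elim_inr]
      refine Prod.ext (Fin.ext ?_) rfl
      simp only [Fin.val_zero]
      omega

variable {N d : ℕ}

lemma embedL_submatrix (B₁ : Matrix (Fin N × Fin d) (Fin N × Fin d) ℝ) :
    (embedL N d B₁).submatrix (eqL N d) (eqL N d) = fromBlocks B₁ 0 0 0 := by
  ext (⟨i, a⟩ | a) (⟨j, b⟩ | b) <;>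
    simp [embedL, eqL, fromBlocks, Fin.is_lt]

lemma gammaL_submatrix (S : Matrix (Fin N × Fin d) (Fin d) ℝ) :
    (gammaL N d S).submatrix (eqL N d) id = fromRows S 1 := by
  ext (⟨i, a⟩ | a) b
  · simp [gammaL, eqL, fromRows, Fin.is_lt]
    rfl
  · simp [gammaL, eqL, fromRows]
    try rfl

lemma embedF_submatrix (B₂ : Matrix (Fin N × Fin d) (Fin N × Fin d) ℝ) :
    (embedF N d B₂).submatrix (eqF N d) (eqF N d) = fromBlocks B₂ 0 0 0 := by
  ext (⟨i, a⟩ | a) (⟨j, b⟩ | b) <;>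
    simp [embedF, eqF, fromBlocks]

lemma gammaF_submatrix (S : Matrix (Fin N × Fin d) (Fin d) ℝ) :
    (gammaF N d S).submatrix (eqF N d) id = fromRows S 1 := by
  ext (⟨i, a⟩ | a) b
  · simp [gammaF, eqF, fromRows]
    rfl
  · simp [gammaF, eqF, fromRows]
    try rfl

lemma sideL (C : Matrix (Fin (N + 1) × Fin d) (Fin (N + 1) × Fin d) ℝ)
    (hC : C.PosDef) :
    (∃ (B₁ : Matrix (Fin N × Fin d) (Fin N × Fin d) ℝ)
        (S₁ : Matrix (Fin N × Fin d) (Fin d) ℝ) (DL : Mat d),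
        B₁.PosDef ∧ BlockTriDiag B₁⁻¹ ∧ DL.PosDef ∧
        C = embedL N d B₁ + gammaL N d S₁ * DL * (gammaL N d S₁)ᵀ) ↔
      (∀ i j : Fin N, Far i j → ∀ a b, C⁻¹ (i.castSucc, a) (j.castSucc, b) = 0) := by
  set e := eqL N d with he
  set A : Matrix (Fin N × Fin d) (Fin N × Fin d) ℝ :=
    Matrix.of (fun p q => C (e (Sum.inl p)) (e (Sum.inl q))) with hA
  set B : Matrix (Fin N × Fin d) (Fin d) ℝ :=
    Matrix.of (fun p a => C (e (Sum.inl p)) (e (Sum.inr a))) with hB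
  set D : Mat d := Matrix.of (fun a b => C (e (Sum.inr a)) (e (Sum.inr b))) with hDdef
  have hsym : ∀ x y, C x y = C y x := by
    intro x y
    conv_lhs => rw [← hC.1]
    simp [conjTranspose_apply]
  have hM : C.submatrix e e = fromBlocks A B Bᵀ D := by
    ext (p | p) (q | q)
    · rfl
    · rfl
    · exact hsym _ _
    · rfl
  have hMpd : (fromBlocks A B Bᵀ D).PosDef := hM ▸ posDef_submatrix_equiv hC e
  obtain ⟨hDpd, hSpd, hinvblk, hdecomp⟩ := schur_key A B D hMpd
  have hsubinv : (C.submatrix e e)⁻¹ = C⁻¹.submatrix e e := by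
    have h1 : C.submatrix (e : _ → _) e = (Matrix.reindex e.symm e.symm) C := by
      simp [Matrix.reindex_apply]
    rw [h1, Matrix.inv_reindex]
    simp [Matrix.reindex_apply]
  have hCinv : ∀ p q, C⁻¹ (e (Sum.inl p)) (e (Sum.inl q)) = (A - B * D⁻¹ * Bᵀ)⁻¹ p q := by
    intro p q
    have h2 := hinvblk p q
    rw [← hM, hsubinv] at h2
    simpa using h2
  have hLe : ∀ p : Fin N × Fin d, e (Sum.inl p) = (p.1.castSucc, p.2) := fun _ => rfl
  constructor
  · rintro ⟨B₁, S₁, DL, hB₁, htri, hDL, hCeq⟩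
    have hsub : fromBlocks A B Bᵀ D =
        fromBlocks B₁ 0 0 0 + fromRows S₁ 1 * DL * (fromRows S₁ 1)ᵀ := by
      rw [← hM, hCeq]
      simp only [Matrix.submatrix_add, Pi.add_apply]
      rw [embedL_submatrix,
        conj_submatrix (gammaL N d S₁) DL e, gammaL_submatrix]
    have hB₁eq : B₁ = A - B * D⁻¹ * Bᵀ := schur_unique A B D B₁ S₁ DL hDL hsub
    intro i j hfar a b
    have h3 := htri i j hfar a b
    rw [hB₁eq] at h3
    have h4 := hCinv (i, a) (j, b)
    rw [hLe, hLe] at h4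
    rw [h4]
    exact h3
  · intro hz
    refine ⟨A - B * D⁻¹ * Bᵀ, B * D⁻¹, D, hSpd, ?_, hDpd, ?_⟩
    · intro i j hfar a b
      have h4 := hCinv (i, a) (j, b)
      rw [hLe, hLe] at h4
      rw [← h4]
      exact hz i j hfar a b
    · apply eq_of_submatrix_eq e
      rw [hM]
      simp only [Matrix.submatrix_add, Pi.add_apply]
      rw [embedL_submatrix,
        conj_submatrix (gammaL N d (B * D⁻¹)) D e, gammaL_submatrix]
      exact hdecomp

lemma sideF (C : Matrix (Fin (N + 1) × Fin d) (Fin (N + 1) × Fin d) ℝ)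
    (hC : C.PosDef) :
    (∃ (B₂ : Matrix (Fin N × Fin d) (Fin N × Fin d) ℝ)
        (S₂ : Matrix (Fin N × Fin d) (Fin d) ℝ) (DF : Mat d),
        B₂.PosDef ∧ BlockTriDiag B₂⁻¹ ∧ DF.PosDef ∧
        C = embedF N d B₂ + gammaF N d S₂ * DF * (gammaF N d S₂)ᵀ) ↔
      (∀ i j : Fin N, Far i j → ∀ a b, C⁻¹ (i.succ, a) (j.succ, b) = 0) := by
  set e := eqF N d with he
  set A : Matrix (Fin N × Fin d) (Fin N × Fin d) ℝ :=
    Matrix.of (fun p q => C (e (Sum.inl p)) (e (Sum.inl q))) with hA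
  set B : Matrix (Fin N × Fin d) (Fin d) ℝ :=
    Matrix.of (fun p a => C (e (Sum.inl p)) (e (Sum.inr a))) with hB
  set D : Mat d := Matrix.of (fun a b => C (e (Sum.inr a)) (e (Sum.inr b))) with hDdef
  have hsym : ∀ x y, C x y = C y x := by
    intro x y
    conv_lhs => rw [← hC.1]
    simp [conjTranspose_apply]
  have hM : C.submatrix e e = fromBlocks A B Bᵀ D := by
    ext (p | p) (q | q)
    · rfl
    · rfl
    · exact hsym _ _
    · rfl
  have hMpd : (fromBlocks A B Bᵀ D).PosDef := hM ▸ posDef_submatrix_equiv hC e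
  obtain ⟨hDpd, hSpd, hinvblk, hdecomp⟩ := schur_key A B D hMpd
  have hsubinv : (C.submatrix e e)⁻¹ = C⁻¹.submatrix e e := by
    have h1 : C.submatrix (e : _ → _) e = (Matrix.reindex e.symm e.symm) C := by
      simp [Matrix.reindex_apply]
    rw [h1, Matrix.inv_reindex]
    simp [Matrix.reindex_apply]
  have hCinv : ∀ p q, C⁻¹ (e (Sum.inl p)) (e (Sum.inl q)) = (A - B * D⁻¹ * Bᵀ)⁻¹ p q := by
    intro p q
    have h2 := hinvblk p q
    rw [← hM, hsubinv] at h2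
    simpa using h2
  have hLe : ∀ p : Fin N × Fin d, e (Sum.inl p) = (p.1.succ, p.2) := fun _ => rfl
  constructor
  · rintro ⟨B₂, S₂, DF, hB₂, htri, hDF, hCeq⟩
    have hsub : fromBlocks A B Bᵀ D =
        fromBlocks B₂ 0 0 0 + fromRows S₂ 1 * DF * (fromRows S₂ 1)ᵀ := by
      rw [← hM, hCeq]
      simp only [Matrix.submatrix_add, Pi.add_apply]
      rw [embedF_submatrix,
        conj_submatrix (gammaF N d S₂) DF e, gammaF_submatrix]
    have hB₂eq : B₂ = A - B * D⁻¹ * Bᵀ := schur_unique A B D B₂ S₂ DF hDF hsub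
    intro i j hfar a b
    have h3 := htri i j hfar a b
    rw [hB₂eq] at h3
    have h4 := hCinv (i, a) (j, b)
    rw [hLe, hLe] at h4
    rw [h4]
    exact h3
  · intro hz
    refine ⟨A - B * D⁻¹ * Bᵀ, B * D⁻¹, D, hSpd, ?_, hDpd, ?_⟩
    · intro i j hfar a b
      have h4 := hCinv (i, a) (j, b)
      rw [hLe, hLe] at h4
      rw [← h4]
      exact hz i j hfar a b
    · apply eq_of_submatrix_eq e
      rw [hM]
      simp only [Matrix.submatrix_add, Pi.add_apply]
      rw [embedF_submatrix,
        conj_submatrix (gammaF N d (B * D⁻¹)) D e, gammaF_submatrix]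
      exact hdecomp

end Sides

/-- Let `C` be an `(N+1)d × (N+1)d` symmetric positive definite
matrix viewed as `(N+1) × (N+1)` blocks of size `d × d`. Then `C⁻¹` is cyclic
block tri-diagonal iff `C` admits both decompositions
`C = B^L + Γ^L D^L (Γ^L)'` and `C = B^F + Γ^F D^F (Γ^F)'`, where `D^L, D^F` are
`d × d` positive definite, `B^L = [[B₁,0],[0,0]]` and `B^F = [[0,0],[0,B₂]]` with
`B₁, B₂` positive definite with block tri-diagonal inverses, `Γ^L = [S₁; I]` and
`Γ^F = [I; S₂]`. -/
theorem stmt18 {N d : ℕ} (hN : 3 ≤ N) (hd : 1 ≤ d)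
    (C : Matrix (Fin (N + 1) × Fin d) (Fin (N + 1) × Fin d) ℝ)
    (hC : C.PosDef) :
    CyclicBlockTriDiag C⁻¹ ↔
      ((∃ (B₁ : Matrix (Fin N × Fin d) (Fin N × Fin d) ℝ)
          (S₁ : Matrix (Fin N × Fin d) (Fin d) ℝ) (DL : Mat d),
          B₁.PosDef ∧ BlockTriDiag B₁⁻¹ ∧ DL.PosDef ∧
          C = embedL N d B₁ + gammaL N d S₁ * DL * (gammaL N d S₁)ᵀ) ∧
       (∃ (B₂ : Matrix (Fin N × Fin d) (Fin N × Fin d) ℝ)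
          (S₂ : Matrix (Fin N × Fin d) (Fin d) ℝ) (DF : Mat d),
          B₂.PosDef ∧ BlockTriDiag B₂⁻¹ ∧ DF.PosDef ∧
          C = embedF N d B₂ + gammaF N d S₂ * DF * (gammaF N d S₂)ᵀ)) := by
  rw [sideL C hC, sideF C hC]
  constructor
  · intro hcyc
    constructor
    · intro i j hfar a b
      refine hcyc i.castSucc j.castSucc ?_ ?_ ?_ a b
      · rcases hfar with h | h
        · exact Or.inl (by simpa using h)
        · exact Or.inr (by simpa using h)
      · rintro ⟨-, hj⟩
        have := j.isLt
        simp only [Fin.coe_castSucc] at hj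
        omega
      · rintro ⟨hi, -⟩
        have := i.isLt
        simp only [Fin.coe_castSucc] at hi
        omega
    · intro i j hfar a b
      refine hcyc i.succ j.succ ?_ ?_ ?_ a b
      · rcases hfar with h | h
        · exact Or.inl (by simp only [Fin.val_succ]; omega)
        · exact Or.inr (by simp only [Fin.val_succ]; omega)
      · rintro ⟨hi, -⟩
        simp only [Fin.val_succ] at hi
        omega
      · rintro ⟨-, hj⟩
        simp only [Fin.val_succ] at hj
        omega
  · rintro ⟨hL, hF⟩ i j hfar hc1 hc2 a b
    have hiN := i.isLt
    have hjN := j.isLt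
    by_cases hcase : (i : ℕ) < N ∧ (j : ℕ) < N
    · have h1 : i = (⟨(i : ℕ), hcase.1⟩ : Fin N).castSucc := by
        exact Fin.ext (by simp)
      have h2 : j = (⟨(j : ℕ), hcase.2⟩ : Fin N).castSucc := by
        exact Fin.ext (by simp)
      have hfar' : Far (⟨(i : ℕ), hcase.1⟩ : Fin N) ⟨(j : ℕ), hcase.2⟩ := by
        rcases hfar with h | h
        · exact Or.inl (by simpa using h)
        · exact Or.inr (by simpa using h)
      have h0 := hL ⟨(i : ℕ), hcase.1⟩ ⟨(j : ℕ), hcase.2⟩ hfar' a b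
      rwa [← h1, ← h2] at h0
    · have hcase2 : 1 ≤ (i : ℕ) ∧ 1 ≤ (j : ℕ) := by
        simp only [not_and_or, not_lt] at hcase
        simp only [not_and_or] at hc1 hc2
        rcases hfar with h | h <;> omega
      have h1 : i = (⟨(i : ℕ) - 1, by omega⟩ : Fin N).succ := by
        refine Fin.ext ?_
        simp only [Fin.val_succ]
        omega
      have h2 : j = (⟨(j : ℕ) - 1, by omega⟩ : Fin N).succ := by
        refine Fin.ext ?_
        simp only [Fin.val_succ]
        omega
      have hfar' : Far (⟨(i : ℕ) - 1, by omega⟩ : Fin N) ⟨(j : ℕ) - 1, by omega⟩ := by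
        rcases hfar with h | h
        · refine Or.inl ?_
          simp only
          omega
        · refine Or.inr ?_
          simp only
          omega
      have h0 := hF ⟨(i : ℕ) - 1, by omega⟩ ⟨(j : ℕ) - 1, by omega⟩ hfar' a b
      rwa [← h1, ← h2] at h0

end CMSeqPaper
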